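/- arXiv:1307.0044 — 2 statements merged into one kernel-verified Lean document; each statement's English description precedes it below -/
import Mathlib

section
/- Consider the battery-model energy allocation problem with unit conversion efficiency, horizon K, integer capacity C, initial level B₀ ≤ C, final requirement B_K = 0, harvests Q(i) ∈ ℕ, leakage functions L(i,·) that are nondecreasing with L(i,B) ≤ B and B ↦ B − L(i,B) nondecreasing, and spending-rate set S = { j·s₀ : 1 ≤ j ≤ m } with s₀ > 0. Let s^g be the greedy spending vector (in each slot spend the largest s ∈ S ∪ {0} with s ≤ B^g(i) and B^g(i) + Q(i) − L(i, B^g(i)) − s ≥ 0). Let s be any feasible spending vector and suppose i′ is the least index with s(i′) ≠ s^g(i′). Then s(i′) < s^g(i′), and there exists a feasible spending vector s′ that agrees with s^g on every slot j ≤ i′ and satisfies Σ_{i=0}^{K−1} s′(i) ≥ Σ_{i=0}^{K−1} s(i). -/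
/-- Battery level evolution (in `ℤ`) for the battery-model energy allocation
problem with unit conversion efficiency: initial level `B₀`, capacity `C`,
harvests `Q`, leakage `L`, spending vector `s`. -/
def batteryLevel (B₀ C : ℕ) (Q : ℕ → ℕ) (L : ℕ → ℕ → ℕ) (s : ℕ → ℕ) : ℕ → ℤ
  | 0 => (B₀ : ℤ)
  | i + 1 =>
      min (batteryLevel B₀ C Q L s i + (Q i : ℤ)
            - (L i (batteryLevel B₀ C Q L s i).toNat : ℤ) - (s i : ℤ)) (C : ℤ)

/-- Feasibility of a spending vector `s` over horizon `K`, capacity `C`,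
initial level `B₀`, final requirement `BK`, harvests `Q`, leakage `L`,
and spending-rate set `S`. -/
def Feasible (K C B₀ BK : ℕ) (Q : ℕ → ℕ) (L : ℕ → ℕ → ℕ) (S : Set ℕ)
    (s : ℕ → ℕ) : Prop :=
  (∀ i < K, s i ∈ S ∪ {0}) ∧
  (∀ i < K, (s i : ℤ) ≤ batteryLevel B₀ C Q L s i) ∧
  (∀ i ≤ K, 0 ≤ batteryLevel B₀ C Q L s i) ∧
  (BK : ℤ) ≤ batteryLevel B₀ C Q L s K

/-!
Up to slot `i'` the levels of `s` and `sg` coincide, so `s i'` was a candidate for the greedy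
choice, whence `s i' < sg i'`. Switch `s` to `sg` through slot `i'`: this overspends by
`d = sg i' - s i'`, a multiple of `s₀`. From slot `i' + 1` on, spend `s j` minus the part of
the debt still outstanding, until it is repaid. Since `L` and `B ↦ B - L B` are monotone, a level
lower by at most `D` is still lower by at most `D` after leakage, so the new levels stay within
the outstanding debt of those of `s` and never become negative. The reduced spendings are still
multiples of `s₀` below `m * s₀`, and the new vector spends `d` more at slot `i'` and withholds
at most `d` afterwards.
-/

open Finset

def levelStep (C q : ℕ) (l : ℕ → ℕ) (b : ℤ) (x : ℕ) : ℤ :=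
  min (b + q - l b.toNat - x) C

lemma batteryLevel_succ (B₀ C : ℕ) (Q : ℕ → ℕ) (L : ℕ → ℕ → ℕ) (s : ℕ → ℕ) (i : ℕ) :
    batteryLevel B₀ C Q L s (i + 1) =
      levelStep C (Q i) (L i) (batteryLevel B₀ C Q L s i) (s i) :=
  rfl

lemma batteryLevel_congr {B₀ C : ℕ} {Q : ℕ → ℕ} {L : ℕ → ℕ → ℕ} {s t : ℕ → ℕ} :
    ∀ {n : ℕ}, (∀ j < n, s j = t j) →
      batteryLevel B₀ C Q L s n = batteryLevel B₀ C Q L t n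
  | 0, _ => rfl
  | n + 1, h => by
    rw [batteryLevel_succ, batteryLevel_succ, h n n.lt_succ_self,
      batteryLevel_congr fun j hj => h j (Nat.lt_succ_of_lt hj)]

lemma levelStep_nonneg_iff {C q x : ℕ} {l : ℕ → ℕ} {b : ℤ} :
    0 ≤ levelStep C q l b x ↔ 0 ≤ b + q - l b.toNat - x := by
  unfold levelStep
  omega

lemma tsub_leak_le_tsub_leak_add {l : ℕ → ℕ} (hmono : Monotone l)
    (hsub : Monotone fun b => b - l b) {n n' d : ℕ} (h : n ≤ n' + d) :
    n - l n ≤ n' - l n' + d := by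
  rcases le_total n n' with hn | hn
  · exact (hsub hn).trans (Nat.le_add_right _ _)
  · have := hmono hn
    omega

section levelStep

variable {C q : ℕ} {l : ℕ → ℕ} {a a' : ℤ} {d : ℕ}

lemma levelStep_le_levelStep_add (hmono : Monotone l) (hle : ∀ b, l b ≤ b)
    (hsub : Monotone fun b => b - l b) (ha : 0 ≤ a) (ha' : 0 ≤ a') (h : a ≤ a' + d)
    {x x' d' : ℕ} (hx : x' + d ≤ x + d') :
    levelStep C q l a x ≤ levelStep C q l a' x' + d' := by
  lift a to ℕ using ha
  lift a' to ℕ using ha'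
  have := tsub_leak_le_tsub_leak_add hmono hsub (n := a) (n' := a') (d := d) (by omega)
  have := hle a
  have := hle a'
  unfold levelStep
  simp only [Int.toNat_natCast]
  omega

lemma levelStep_tsub_nonneg (hmono : Monotone l) (hle : ∀ b, l b ≤ b)
    (hsub : Monotone fun b => b - l b) (ha : 0 ≤ a) (ha' : 0 ≤ a') (h : a ≤ a' + d) {x : ℕ}
    (hnext : 0 ≤ levelStep C q l a x) : 0 ≤ levelStep C q l a' (x - d) := by
  lift a to ℕ using ha
  lift a' to ℕ using ha'
  have := tsub_leak_le_tsub_leak_add hmono hsub (n := a) (n' := a') (d := d) (by omega)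
  have := hle a
  have := hle a'
  unfold levelStep at *
  simp only [Int.toNat_natCast] at *
  omega

end levelStep

lemma mem_multiples_union_zero_iff {s₀ m x : ℕ} :
    x ∈ {x | ∃ j, 1 ≤ j ∧ j ≤ m ∧ x = j * s₀} ∪ {0} ↔ s₀ ∣ x ∧ x ≤ m * s₀ := by
  constructor
  · rintro (⟨j, -, hjm, rfl⟩ | rfl)
    · exact ⟨dvd_mul_left s₀ j, Nat.mul_le_mul_right s₀ hjm⟩
    · simp
  · rintro ⟨⟨j, rfl⟩, hx⟩
    rcases eq_or_ne (s₀ * j) 0 with h0 | h0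
    · simp [h0]
    · rw [mul_comm] at hx h0 ⊢
      obtain ⟨hj, hs₀⟩ := Nat.mul_ne_zero_iff.1 h0
      exact Or.inl ⟨j, Nat.one_le_iff_ne_zero.2 hj, Nat.le_of_mul_le_mul_right hx
        (Nat.pos_of_ne_zero hs₀), rfl⟩

section deficit

variable (s : ℕ → ℕ) (d n : ℕ)

/-- What is left at slot `j` of a debt `d`, incurred before slot `n`, that is repaid by
withholding the spendings `s n, s (n + 1), …`. -/
def deficit (j : ℕ) : ℕ :=
  d - ∑ t ∈ Ico n j, s t

@[simp]
lemma deficit_self : deficit s d n n = d := by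
  simp [deficit]

variable {s d n}

lemma deficit_succ {j : ℕ} (hj : n ≤ j) : deficit s d n (j + 1) = deficit s d n j - s j := by
  rw [deficit, deficit, sum_Ico_succ_top hj, Nat.sub_sub]

lemma dvd_deficit {s₀ k : ℕ} (hd : s₀ ∣ d) (hs : ∀ j ∈ Ico n k, s₀ ∣ s j) :
    s₀ ∣ deficit s d n k :=
  Nat.dvd_sub hd (dvd_sum hs)

lemma sum_Ico_add_deficit {k : ℕ} (hk : n ≤ k) :
    ∑ j ∈ Ico n k, s j + deficit s d n k = ∑ j ∈ Ico n k, (s j - deficit s d n j) + d := by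
  induction k, hk using Nat.le_induction with
  | base => simp
  | succ k hk ih =>
    rw [sum_Ico_succ_top hk, sum_Ico_succ_top hk, deficit_succ hk]
    omega

lemma sum_range_le_sum_range_of_deficit {t : ℕ → ℕ} {K : ℕ} (hnK : n ≤ K)
    (hhead : ∑ j ∈ range n, s j + d ≤ ∑ j ∈ range n, t j)
    (htail : ∀ j, n ≤ j → t j = s j - deficit s d n j) :
    ∑ j ∈ range K, s j ≤ ∑ j ∈ range K, t j := by
  rw [← sum_range_add_sum_Ico s hnK, ← sum_range_add_sum_Ico t hnK,
    sum_congr rfl fun j hj => htail j (mem_Ico.1 hj).1]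
  have := sum_Ico_add_deficit (s := s) (d := d) hnK
  omega

end deficit

section Feasible

variable {K C B₀ : ℕ} {Q : ℕ → ℕ} {L : ℕ → ℕ → ℕ} {S : Set ℕ} {s t : ℕ → ℕ}

lemma Feasible.congr {BK : ℕ} (hs : Feasible K C B₀ BK Q L S s) (hst : ∀ j < K, s j = t j) :
    Feasible K C B₀ BK Q L S t := by
  have hlevel : ∀ j ≤ K, batteryLevel B₀ C Q L s j = batteryLevel B₀ C Q L t j :=
    fun j hj => batteryLevel_congr fun i hi => hst i (by omega)
  obtain ⟨hmem, hspend, hnonneg, hfinal⟩ := hs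
  refine ⟨fun i hi => hst i hi ▸ hmem i hi, fun i hi => ?_, fun i hi => ?_, ?_⟩
  · rw [← hst i hi, ← hlevel i hi.le]
    exact hspend i hi
  · rw [← hlevel i hi]
    exact hnonneg i hi
  · rw [← hlevel K le_rfl]
    exact hfinal

lemma Feasible.levelStep_nonneg {BK : ℕ} (hs : Feasible K C B₀ BK Q L S s) {i : ℕ} (hi : i < K) :
    0 ≤ levelStep C (Q i) (L i) (batteryLevel B₀ C Q L s i) (s i) :=
  hs.2.2.1 (i + 1) hi

lemma feasible_zero_of_forall_lt
    (hmem : ∀ i < K, s i ∈ S ∪ {0})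
    (hslot : ∀ i < K, (s i : ℤ) ≤ batteryLevel B₀ C Q L s i ∧
      0 ≤ batteryLevel B₀ C Q L s i + (Q i : ℤ)
        - (L i (batteryLevel B₀ C Q L s i).toNat : ℤ) - (s i : ℤ)) :
    Feasible K C B₀ 0 Q L S s := by
  have hnonneg : ∀ i ≤ K, 0 ≤ batteryLevel B₀ C Q L s i
    | 0, _ => Int.natCast_nonneg B₀
    | i + 1, hi => levelStep_nonneg_iff.2 (hslot i hi).2
  exact ⟨hmem, fun i hi => (hslot i hi).1, hnonneg, hnonneg K le_rfl⟩

lemma batteryLevel_le_add_deficit (hLmono : ∀ i, Monotone (L i)) (hLle : ∀ i B, L i B ≤ B)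
    (hLdiff : ∀ i, Monotone (fun B => B - L i B)) {n d : ℕ}
    (hs : ∀ j ≤ K, 0 ≤ batteryLevel B₀ C Q L s j) (ht : 0 ≤ batteryLevel B₀ C Q L t n)
    (hlevel : batteryLevel B₀ C Q L s n ≤ batteryLevel B₀ C Q L t n + d)
    (htail : ∀ j, n ≤ j → t j = s j - deficit s d n j) {k : ℕ} (hnk : n ≤ k) (hkK : k ≤ K) :
    0 ≤ batteryLevel B₀ C Q L t k ∧
      batteryLevel B₀ C Q L s k ≤ batteryLevel B₀ C Q L t k + deficit s d n k := by
  induction k, hnk using Nat.le_induction with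
  | base => exact ⟨ht, by simpa using hlevel⟩
  | succ k hnk ih =>
    obtain ⟨htk, hlevelk⟩ := ih (by omega)
    have hsk := hs k (by omega)
    rw [batteryLevel_succ, batteryLevel_succ, htail k hnk, deficit_succ hnk]
    exact ⟨levelStep_tsub_nonneg (hLmono k) (hLle k) (hLdiff k) hsk htk hlevelk (hs (k + 1) hkK),
      levelStep_le_levelStep_add (hLmono k) (hLle k) (hLdiff k) hsk htk hlevelk (by omega)⟩

lemma Feasible.of_deficit (hLmono : ∀ i, Monotone (L i)) (hLle : ∀ i B, L i B ≤ B)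
    (hLdiff : ∀ i, Monotone (fun B => B - L i B)) {s₀ m n d : ℕ}
    (hS : S = {x | ∃ j, 1 ≤ j ∧ j ≤ m ∧ x = j * s₀}) (hs : Feasible K C B₀ 0 Q L S s)
    (ht : Feasible n C B₀ 0 Q L S t) (hd : s₀ ∣ d)
    (hlevel : batteryLevel B₀ C Q L s n ≤ batteryLevel B₀ C Q L t n + d)
    (htail : ∀ j, n ≤ j → t j = s j - deficit s d n j) :
    Feasible K C B₀ 0 Q L S t := by
  subst hS
  have hinv {k : ℕ} (hnk : n ≤ k) (hkK : k ≤ K) := batteryLevel_le_add_deficit hLmono hLle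
    hLdiff hs.2.2.1 (ht.2.2.1 n le_rfl) hlevel htail hnk hkK
  obtain ⟨hmem, hspend, hnonneg, -⟩ := hs
  obtain ⟨htmem, htspend, htnonneg, -⟩ := ht
  have htnonneg' : ∀ i ≤ K, 0 ≤ batteryLevel B₀ C Q L t i := fun i hi =>
    if hin : i ≤ n then htnonneg i hin else (hinv (by omega) hi).1
  refine ⟨fun i hi => ?_, fun i hi => ?_, htnonneg', by simpa using htnonneg' K le_rfl⟩
  · rcases lt_or_ge i n with hin | hin
    · exact htmem i hin
    have hdvd : s₀ ∣ deficit s d n i := dvd_deficit hd fun j hj =>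
      (mem_multiples_union_zero_iff.1 (hmem j ((mem_Ico.1 hj).2.trans hi))).1
    obtain ⟨hdvd_s, hle⟩ := mem_multiples_union_zero_iff.1 (hmem i hi)
    rw [htail i hin]
    exact mem_multiples_union_zero_iff.2 ⟨Nat.dvd_sub hdvd_s hdvd, (Nat.sub_le _ _).trans hle⟩
  · rcases lt_or_ge i n with hin | hin
    · exact htspend i hin
    have := hinv hin hi.le
    have := hspend i hi
    rw [htail i hin]
    omega

end Feasible

theorem greedy_exchange_general
    (K C B₀ : ℕ)
    (Q : ℕ → ℕ) (L : ℕ → ℕ → ℕ)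
    (hLmono : ∀ i, Monotone (L i))
    (hLle : ∀ i B, L i B ≤ B)
    (hLdiff : ∀ i, Monotone (fun B => B - L i B))
    (s₀ m : ℕ)
    (S : Set ℕ) (hSdef : S = {x | ∃ j, 1 ≤ j ∧ j ≤ m ∧ x = j * s₀})
    (sg : ℕ → ℕ)
    (hsgmem : ∀ i < K, sg i ∈ S ∪ {0})
    (hsgfeas : ∀ i < K, (sg i : ℤ) ≤ batteryLevel B₀ C Q L sg i ∧
        0 ≤ batteryLevel B₀ C Q L sg i + (Q i : ℤ)
              - (L i (batteryLevel B₀ C Q L sg i).toNat : ℤ) - (sg i : ℤ))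
    (hsgmax : ∀ i < K, ∀ x ∈ S ∪ {0},
        (x : ℤ) ≤ batteryLevel B₀ C Q L sg i →
        0 ≤ batteryLevel B₀ C Q L sg i + (Q i : ℤ)
              - (L i (batteryLevel B₀ C Q L sg i).toNat : ℤ) - (x : ℤ) →
        x ≤ sg i)
    (s : ℕ → ℕ) (hs : Feasible K C B₀ 0 Q L S s)
    (i' : ℕ) (hi'K : i' < K) (hne : s i' ≠ sg i')
    (hfirst : ∀ j < i', s j = sg j) :
    s i' < sg i' ∧
    ∃ s' : ℕ → ℕ, Feasible K C B₀ 0 Q L S s' ∧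
      (∀ j ≤ i', s' j = sg j) ∧
      ∑ i ∈ Finset.range K, s i ≤ ∑ i ∈ Finset.range K, s' i := by
  have hagree : batteryLevel B₀ C Q L s i' = batteryLevel B₀ C Q L sg i' :=
    batteryLevel_congr hfirst
  have hlt : s i' < sg i' := by
    refine lt_of_le_of_ne (hsgmax i' hi'K _ (hs.1 i' hi'K) ?_ ?_) hne
    · exact hagree ▸ hs.2.1 i' hi'K
    · exact hagree ▸ levelStep_nonneg_iff.1 (hs.levelStep_nonneg hi'K)
  set d := sg i' - s i' with hd_def
  set s' : ℕ → ℕ := fun j => if j ≤ i' then sg j else s j - deficit s d (i' + 1) j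
  have hs'sg : ∀ j ≤ i', s' j = sg j := fun j hj => if_pos hj
  have hs'tail : ∀ j, i' + 1 ≤ j → s' j = s j - deficit s d (i' + 1) j :=
    fun j hj => if_neg (by omega)
  have hprefix : Feasible (i' + 1) C B₀ 0 Q L S s' :=
    (feasible_zero_of_forall_lt (fun j hj => hsgmem j (by omega))
      fun j hj => hsgfeas j (by omega)).congr fun j hj => (hs'sg j (by omega)).symm
  have hlevel : batteryLevel B₀ C Q L s (i' + 1) ≤ batteryLevel B₀ C Q L s' (i' + 1) + d := by
    rw [batteryLevel_congr (t := sg) fun j hj => hs'sg j (by omega), batteryLevel_succ,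
      batteryLevel_succ, hagree]
    have hnonneg : 0 ≤ batteryLevel B₀ C Q L sg i' := hagree ▸ hs.2.2.1 i' hi'K.le
    exact levelStep_le_levelStep_add (hLmono i') (hLle i') (hLdiff i') hnonneg hnonneg
      (d := 0) (by simp) (by omega)
  have hd : s₀ ∣ d := by
    subst hSdef
    exact Nat.dvd_sub (mem_multiples_union_zero_iff.1 (hsgmem i' hi'K)).1
      (mem_multiples_union_zero_iff.1 (hs.1 i' hi'K)).1
  have hhead : ∑ j ∈ range (i' + 1), s j + d ≤ ∑ j ∈ range (i' + 1), s' j := by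
    have hbelow : ∑ j ∈ range i', s j = ∑ j ∈ range i', s' j := sum_congr rfl fun j hj =>
      (hfirst j (mem_range.1 hj)).trans (hs'sg j (mem_range.1 hj).le).symm
    rw [sum_range_succ, sum_range_succ, hs'sg i' le_rfl, hbelow]
    omega
  exact ⟨hlt, s', hs.of_deficit hLmono hLle hLdiff hSdef hprefix hd hlevel hs'tail, hs'sg,
    sum_range_le_sum_range_of_deficit hi'K hhead hs'tail⟩

/-- Exchange step: if a feasible `s` first differs from the greedy vector `sg`
at slot `i'`, then `s i' < sg i'` and there is a feasible `s'` agreeing with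
`sg` up to slot `i'` whose total spending is at least that of `s`. -/
theorem greedy_exchange
    (K C B₀ : ℕ) (hB₀C : B₀ ≤ C)
    (Q : ℕ → ℕ) (L : ℕ → ℕ → ℕ)
    (hLmono : ∀ i, Monotone (L i))
    (hLle : ∀ i B, L i B ≤ B)
    (hLdiff : ∀ i, Monotone (fun B => B - L i B))
    (s₀ m : ℕ) (hs₀ : 0 < s₀) (hm : 1 ≤ m)
    (S : Set ℕ) (hSdef : S = {x | ∃ j, 1 ≤ j ∧ j ≤ m ∧ x = j * s₀})
    (sg : ℕ → ℕ)
    (hsgmem : ∀ i < K, sg i ∈ S ∪ {0})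
    (hsgfeas : ∀ i < K, (sg i : ℤ) ≤ batteryLevel B₀ C Q L sg i ∧
        0 ≤ batteryLevel B₀ C Q L sg i + (Q i : ℤ)
              - (L i (batteryLevel B₀ C Q L sg i).toNat : ℤ) - (sg i : ℤ))
    (hsgmax : ∀ i < K, ∀ x ∈ S ∪ {0},
        (x : ℤ) ≤ batteryLevel B₀ C Q L sg i →
        0 ≤ batteryLevel B₀ C Q L sg i + (Q i : ℤ)
              - (L i (batteryLevel B₀ C Q L sg i).toNat : ℤ) - (x : ℤ) →
        x ≤ sg i)
    (s : ℕ → ℕ) (hs : Feasible K C B₀ 0 Q L S s)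
    (i' : ℕ) (hi'K : i' < K) (hne : s i' ≠ sg i')
    (hfirst : ∀ j < i', s j = sg j) :
    s i' < sg i' ∧
    ∃ s' : ℕ → ℕ, Feasible K C B₀ 0 Q L S s' ∧
      (∀ j ≤ i', s' j = sg j) ∧
      ∑ i ∈ Finset.range K, s i ≤ ∑ i ∈ Finset.range K, s' i :=
  greedy_exchange_general K C B₀ Q L hLmono hLle hLdiff s₀ m S hSdef sg hsgmem hsgfeas hsgmax s hs
    i' hi'K hne hfirst
end

section
/- For every n ≥ 1 and every a : {1,…,n} → ℕ, if Σ_{j=1}^{n} a_j ≤ n and Σ_{j=1}^{n} a_j·2^{n−j} ≡ 2ⁿ − 1 (mod 2ⁿ), then a_j = 1 for every j, and consequently Σ_{j=1}^{n} a_j·2^{n−j} = 2ⁿ − 1. -/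
/-!
Read the coefficients as little-endian binary digits. The lowest digit is odd, say `2b + 1`;
carrying `b` into the next digit gives a representation of `2^(n-1) - 1` modulo `2^(n-1)` with
one digit fewer and digit sum smaller by `b + 1`. By induction its digits are all `1`, and then
the digit-sum bound forces `b = 0`.
-/

open Finset

namespace Nat

theorem modEq_two_pow_sub_one_of_two_mul_add_one {x k : ℕ}
    (h : 2 * x + 1 ≡ 2 ^ (k + 1) - 1 [MOD 2 ^ (k + 1)]) : x ≡ 2 ^ k - 1 [MOD 2 ^ k] := by
  have hk : 2 ^ (k + 1) - 1 = 2 * (2 ^ k - 1) + 1 := by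
    have := Nat.one_le_two_pow (n := k); rw [pow_succ]; omega
  rw [hk, pow_succ'] at h
  exact ModEq.mul_left_cancel' two_ne_zero (ModEq.add_right_cancel' 1 h)

theorem mod_two_eq_one_of_modEq_two_pow_sub_one {x k : ℕ} (hk : k ≠ 0)
    (h : x ≡ 2 ^ k - 1 [MOD 2 ^ k]) : x % 2 = 1 := by
  have h2 : x ≡ 2 ^ k - 1 [MOD 2] := h.of_dvd (dvd_pow_self 2 hk)
  obtain ⟨k, rfl⟩ := exists_eq_succ_of_ne_zero hk
  have := Nat.one_le_two_pow (n := k)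
  unfold ModEq at h2
  rw [pow_succ] at h2
  omega

theorem forall_eq_one_of_ofDigits_two_modEq : ∀ {L : List ℕ}, L.sum ≤ L.length →
    ofDigits 2 L ≡ 2 ^ L.length - 1 [MOD 2 ^ L.length] → ∀ x ∈ L, x = 1
  | [], _, _ => by simp
  | [c], hsum, hmod => by
    have := mod_two_eq_one_of_modEq_two_pow_sub_one one_ne_zero hmod
    simp only [List.sum_singleton, List.length_singleton, ofDigits_singleton] at hsum this
    simp only [List.mem_singleton, forall_eq]
    omega
  | c₀ :: c₁ :: L, hsum, hmod => by
    have hodd := mod_two_eq_one_of_modEq_two_pow_sub_one (by simp) hmod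
    simp only [ofDigits_cons] at hodd
    obtain ⟨b, hb⟩ : ∃ b, c₀ = 2 * b + 1 := ⟨c₀ / 2, by omega⟩
    have hcarry : ofDigits 2 (c₀ :: c₁ :: L) = 2 * ofDigits 2 ((c₁ + b) :: L) + 1 := by
      simp only [ofDigits_cons, hb]; ring
    have hsum' : ((c₁ + b) :: L).sum ≤ ((c₁ + b) :: L).length := by
      simp only [List.sum_cons, List.length_cons] at hsum ⊢; omega
    have hmod' : ofDigits 2 ((c₁ + b) :: L) ≡ 2 ^ ((c₁ + b) :: L).length - 1
        [MOD 2 ^ ((c₁ + b) :: L).length] :=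
      modEq_two_pow_sub_one_of_two_mul_add_one (hcarry ▸ hmod)
    have hones := forall_eq_one_of_ofDigits_two_modEq hsum' hmod'
    have hL : L.sum = L.length := by
      rw [List.eq_replicate_of_mem fun x hx => hones x (List.mem_cons_of_mem _ hx)]
      simp
    have hc₁ : c₁ + b = 1 := hones _ List.mem_cons_self
    simp only [List.sum_cons, List.length_cons] at hsum
    intro x hx
    simp only [List.mem_cons] at hx
    rcases hx with rfl | rfl | hx
    · omega
    · omega
    · exact hones x (List.mem_cons_of_mem _ hx)
termination_by L => L.length

theorem ofDigits_map_range (b : ℕ) (f : ℕ → ℕ) (n : ℕ) :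
    ofDigits b ((List.range n).map f) = ∑ i ∈ range n, f i * b ^ i := by
  induction n with
  | zero => simp
  | succ n ih =>
    rw [List.range_succ, List.map_append, ofDigits_append, ih, sum_range_succ]
    simp [mul_comm]

end Nat

theorem sum_Icc_one_eq_sum_range_sub {M : Type*} [AddCommMonoid M] (f : ℕ → M) (n : ℕ) :
    ∑ j ∈ Icc 1 n, f j = ∑ i ∈ range n, f (n - i) := by
  rw [range_eq_Ico, sum_Ico_reflect f 0 (Nat.le_succ n), Nat.add_sub_cancel_left, Nat.sub_zero,
    Ico_add_one_right_eq_Icc]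

theorem pow_two_representation_unique_general (n : ℕ) (a : ℕ → ℕ)
    (hsum : ∑ j ∈ Finset.Icc 1 n, a j ≤ n)
    (hmod : ∑ j ∈ Finset.Icc 1 n, a j * 2 ^ (n - j) ≡ 2 ^ n - 1 [MOD 2 ^ n]) :
    (∀ j ∈ Finset.Icc 1 n, a j = 1) ∧
    ∑ j ∈ Finset.Icc 1 n, a j * 2 ^ (n - j) = 2 ^ n - 1 := by
  set L := (List.range n).map fun i => a (n - i)
  have hlen : L.length = n := by simp [L]
  have hLsum : L.sum = ∑ j ∈ Icc 1 n, a j := by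
    rw [sum_Icc_one_eq_sum_range_sub]; rfl
  have hval : Nat.ofDigits 2 L = ∑ j ∈ Icc 1 n, a j * 2 ^ (n - j) := by
    rw [sum_Icc_one_eq_sum_range_sub, Nat.ofDigits_map_range]
    exact sum_congr rfl fun i hi => by rw [Nat.sub_sub_self (mem_range.1 hi).le]
  have hones : ∀ x ∈ L, x = 1 :=
    Nat.forall_eq_one_of_ofDigits_two_modEq (by omega) (by rwa [hval, hlen])
  refine ⟨fun j hj => hones _ ?_, ?_⟩
  · rw [mem_Icc] at hj
    exact List.mem_map.2 ⟨n - j, List.mem_range.2 (by omega), by rw [Nat.sub_sub_self hj.2]⟩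
  · rw [← hval]
    refine Nat.ModEq.eq_of_lt_of_lt (by rwa [hval]) ?_ (Nat.sub_lt (Nat.two_pow_pos n) one_pos)
    simpa [hlen] using
      Nat.ofDigits_lt_base_pow_length one_lt_two fun x hx => (hones x hx).trans_lt one_lt_two

/-- Uniqueness of the representation of `2ⁿ − 1` by the powers
`2^{n−1}, …, 2⁰`: if `∑_{j=1}^n a_j ≤ n` and
`∑_{j=1}^n a_j·2^{n−j} ≡ 2ⁿ − 1 (mod 2ⁿ)`, then all `a_j = 1` and the sum
equals `2ⁿ − 1` exactly. -/
theorem pow_two_representation_unique (n : ℕ) (hn : 1 ≤ n) (a : ℕ → ℕ)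
    (hsum : ∑ j ∈ Finset.Icc 1 n, a j ≤ n)
    (hmod : ∑ j ∈ Finset.Icc 1 n, a j * 2 ^ (n - j) ≡ 2 ^ n - 1 [MOD 2 ^ n]) :
    (∀ j ∈ Finset.Icc 1 n, a j = 1) ∧
    ∑ j ∈ Finset.Icc 1 n, a j * 2 ^ (n - j) = 2 ^ n - 1 :=
  pow_two_representation_unique_general n a hsum hmod
end
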